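/- Let F : ℝⁿ → ℝ be twice continuously differentiable with L₂-Lipschitz Hessian, and let α > 0. Fix x ∈ ℝⁿ, g ∈ ℝⁿ, and a symmetric matrix Ĥ ∈ ℝ^{n×n}, and let x⁺ be a global minimizer over ℝⁿ of the model f̂(y) = ⟨g, y − x⟩ + (1/2)⟨y − x, Ĥ(y − x)⟩ + (α/6)‖y − x‖³. Then ‖∇F(x⁺)‖ ≤ (L₂ + α)‖x⁺ − x‖² + ‖∇F(x) − g‖ + (1/(2(L₂ + α))) ‖∇²F(x) − Ĥ‖², where the Hessian difference is measured in spectral norm. -/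

import Mathlib

/-!
Write `s = x⁺ - x`. Stationarity of the cubic model at its minimizer gives
`g + Ĥ s + (α/2)‖s‖ s = 0`, so that
`∇F(x⁺) = (∇F(x⁺) - ∇F(x) - ∇²F(x) s) + (∇F(x) - g) + (∇²F(x) - Ĥ) s - (α/2)‖s‖ s`.
The Lipschitz Hessian bounds the first term by `(L₂/2)‖s‖²`, the third is at most
`‖∇²F(x) - Ĥ‖ ‖s‖`, and Young's inequality `δ‖s‖ ≤ δ²/(2(L₂+α)) + ((L₂+α)/2)‖s‖²`
absorbs it into the remaining terms.
-/

open scoped BigOperators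

/-- The spectral norm of a real square matrix: the operator norm of the associated
continuous linear endomorphism of Euclidean space. -/
noncomputable def specNorm {n : ℕ} (A : Matrix (Fin n) (Fin n) ℝ) : ℝ :=
  ‖Matrix.toEuclideanCLM (𝕜 := ℝ) A‖

open Set
open scoped RealInnerProductSpace

theorem norm_sub_sub_fderiv_le_of_lipschitz {E F : Type*} [NormedAddCommGroup E]
    [NormedSpace ℝ E] [NormedAddCommGroup F] [NormedSpace ℝ F] {f : E → F}
    {f' : E → E →L[ℝ] F} (hf : ∀ y, HasFDerivAt f (f' y) y) {x : E} {L : ℝ}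
    (hf' : ∀ y, ‖f' y - f' x‖ ≤ L * ‖y - x‖) (s : E) :
    ‖f (x + s) - f x - f' x s‖ ≤ L / 2 * ‖s‖ ^ 2 := by
  let φ : ℝ → F := fun t => f (x + t • s) - f x - t • f' x s
  have hφ : ∀ t, HasDerivAt φ (f' (x + t • s) s - f' x s) t := by
    intro t
    have hline : HasDerivAt (fun t : ℝ => x + t • s) s t := by
      simpa using ((hasDerivAt_id t).smul_const s).const_add x
    exact (((hf _).comp_hasDerivAt t hline).sub_const (f x)).sub
      (by simpa using (hasDerivAt_id t).smul_const (f' x s))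
  have hφ' : ∀ t ∈ Ico (0 : ℝ) 1, ‖f' (x + t • s) s - f' x s‖ ≤ L * ‖s‖ ^ 2 * t := by
    intro t ht
    calc ‖f' (x + t • s) s - f' x s‖ = ‖(f' (x + t • s) - f' x) s‖ := rfl
      _ ≤ ‖f' (x + t • s) - f' x‖ * ‖s‖ := ContinuousLinearMap.le_opNorm _ _
      _ ≤ L * ‖t • s‖ * ‖s‖ := by
          gcongr
          simpa using hf' (x + t • s)
      _ = L * ‖s‖ ^ 2 * t := by
          rw [norm_smul, Real.norm_of_nonneg ht.1]
          ring
  have hB : ∀ t : ℝ, HasDerivAt (fun t => L * ‖s‖ ^ 2 / 2 * t ^ 2) (L * ‖s‖ ^ 2 * t) t :=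
    fun t => ((hasDerivAt_pow 2 t).const_mul _).congr_deriv (by norm_num; ring)
  have hφ1 := image_norm_le_of_norm_deriv_right_le_deriv_boundary (a := 0) (b := 1)
    (fun t _ => (hφ t).continuousAt.continuousWithinAt) (fun t _ => (hφ t).hasDerivWithinAt)
    (by simp [φ]) hB hφ' (right_mem_Icc.2 zero_le_one)
  have hφ1_eq : φ 1 = f (x + s) - f x - f' x s := by simp [φ]
  rw [hφ1_eq] at hφ1
  linarith

section CubicModel

variable {E : Type*} [NormedAddCommGroup E] [InnerProductSpace ℝ E]

noncomputable def cubicModel (g : E) (T : E →L[ℝ] E) (α : ℝ) (s : E) : ℝ :=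
  ⟪g, s⟫ + 1 / 2 * ⟪s, T s⟫ + α / 6 * ‖s‖ ^ 3

theorem hasFDerivAt_cubicModel {g : E} {T : E →L[ℝ] E} (hT : (T : E →ₗ[ℝ] E).IsSymmetric)
    (α : ℝ) (s : E) :
    HasFDerivAt (cubicModel g T α) (innerSL ℝ (g + T s + (α / 2 * ‖s‖) • s)) s := by
  have hquad := (hasFDerivAt_id s).inner ℝ (T.hasFDerivAt (x := s))
  have hcube : HasFDerivAt (fun y : E => ‖y‖ ^ 3) ((3 * ‖s‖) • innerSL ℝ s) s := by
    have h := hasFDerivAt_norm_rpow s (p := 3) (by norm_num)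
    norm_num at h
    exact_mod_cast h
  refine ((((innerSL ℝ g).hasFDerivAt (x := s)).add (hquad.const_mul (1 / 2))).add
    (hcube.const_mul (α / 6))).congr_fderiv ?_
  ext w
  have hsymm : ⟪s, T w⟫ = ⟪T s, w⟫ := (hT s w).symm
  simp [fderivInnerCLM_apply, hsymm, real_inner_comm w]
  ring

theorem add_add_smul_eq_zero_of_isMinOn_cubicModel {g : E} {T : E →L[ℝ] E}
    (hT : (T : E →ₗ[ℝ] E).IsSymmetric) {α : ℝ} {s : E}
    (hs : IsMinOn (cubicModel g T α) univ s) : g + T s + (α / 2 * ‖s‖) • s = 0 := by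
  have h := (hs.isLocalMin Filter.univ_mem).hasFDerivAt_eq_zero (hasFDerivAt_cubicModel hT α s)
  have hnorm := congrArg norm h
  rwa [innerSL_apply_norm, norm_zero, norm_eq_zero] at hnorm

theorem norm_add_le_of_isMinOn_cubicModel {G : E → E} {H : E → E →L[ℝ] E}
    (hG : ∀ y, HasFDerivAt G (H y) y) {x : E} {L : ℝ} (hL : 0 ≤ L)
    (hH : ∀ y, ‖H y - H x‖ ≤ L * ‖y - x‖) {α : ℝ} (hα : 0 < α) {g : E} {T : E →L[ℝ] E}
    (hT : (T : E →ₗ[ℝ] E).IsSymmetric) {s : E} (hs : IsMinOn (cubicModel g T α) univ s) :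
    ‖G (x + s)‖ ≤ (L + α) * ‖s‖ ^ 2 + ‖G x - g‖ + 1 / (2 * (L + α)) * ‖H x - T‖ ^ 2 := by
  have hopt := add_add_smul_eq_zero_of_isMinOn_cubicModel hT hs
  have hdecomp : G (x + s) =
      (G (x + s) - G x - H x s) + (G x - g) + (H x - T) s - (α / 2 * ‖s‖) • s := by
    rw [sub_apply]
    linear_combination (norm := module) hopt
  have hcubic : ‖(α / 2 * ‖s‖) • s‖ = α / 2 * ‖s‖ ^ 2 := by
    rw [norm_smul, Real.norm_of_nonneg (by positivity)]
    ring
  have hyoung := two_mul_le_add_mul_sq (a := ‖s‖) (b := ‖H x - T‖) (by positivity : 0 < L + α)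
  calc ‖G (x + s)‖
      ≤ ‖G (x + s) - G x - H x s‖ + ‖G x - g‖ + ‖(H x - T) s‖ + ‖(α / 2 * ‖s‖) • s‖ := by
        conv_lhs => rw [hdecomp]
        exact (norm_sub_le _ _).trans (add_le_add_left norm_add₃_le _)
    _ ≤ L / 2 * ‖s‖ ^ 2 + ‖G x - g‖ + ‖H x - T‖ * ‖s‖ + α / 2 * ‖s‖ ^ 2 := by
        rw [hcubic]
        gcongr
        · exact norm_sub_sub_fderiv_le_of_lipschitz hG hH s
        · exact (H x - T).le_opNorm s
    _ ≤ (L + α) * ‖s‖ ^ 2 + ‖G x - g‖ + 1 / (2 * (L + α)) * ‖H x - T‖ ^ 2 := by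
        rw [one_div, mul_inv, ← div_eq_inv_mul (L + α)⁻¹ 2]
        linarith

end CubicModel

section Euclidean

variable {ι : Type*} [Fintype ι] [DecidableEq ι]

theorem Matrix.inner_toEuclideanCLM_eq_sum (A : Matrix ι ι ℝ) (v w : EuclideanSpace ℝ ι) :
    ⟪v, toEuclideanCLM (𝕜 := ℝ) A w⟫ = ∑ i, ∑ j, v i * A i j * w j := by
  simp [inner_toEuclideanCLM, dotProduct, mulVec, Finset.mul_sum, mul_assoc]

theorem Matrix.IsSymm.isSymmetric_toEuclideanCLM {A : Matrix ι ι ℝ} (hA : A.IsSymm) :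
    (toEuclideanCLM (𝕜 := ℝ) A : EuclideanSpace ℝ ι →ₗ[ℝ] EuclideanSpace ℝ ι).IsSymmetric := by
  rw [coe_toEuclideanCLM_eq_toEuclideanLin, isSymmetric_toEuclideanLin_iff]
  exact isHermitian_iff_isSymm.2 hA

theorem cubicModel_toEuclideanCLM (g : EuclideanSpace ℝ ι) (A : Matrix ι ι ℝ) (α : ℝ)
    (v : EuclideanSpace ℝ ι) :
    cubicModel g (Matrix.toEuclideanCLM (𝕜 := ℝ) A) α v =
      ∑ i, g i * v i + 1 / 2 * ∑ i, ∑ j, v i * A i j * v j + α / 6 * ‖v‖ ^ 3 := by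
  rw [cubicModel, Matrix.inner_toEuclideanCLM_eq_sum]
  simp [PiLp.inner_apply, mul_comm]

theorem hasFDerivAt_gradient_of_iteratedFDeriv {F : EuclideanSpace ℝ ι → ℝ}
    (hF : ContDiff ℝ 2 F) {y : EuclideanSpace ℝ ι} {A : Matrix ι ι ℝ}
    (hA : ∀ w₁ w₂ : EuclideanSpace ℝ ι,
      iteratedFDeriv ℝ 2 F y ![w₁, w₂] = ∑ i, ∑ j, w₁ i * A i j * w₂ j) :
    HasFDerivAt (gradient F) (Matrix.toEuclideanCLM (𝕜 := ℝ) A) y := by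
  have hF' : HasFDerivAt (fderiv ℝ F) (fderiv ℝ (fderiv ℝ F) y) y :=
    ((hF.fderiv_right (m := 1) le_rfl).differentiable one_ne_zero y).hasFDerivAt
  refine ((InnerProductSpace.toDual ℝ _).symm.toContinuousLinearEquiv.hasFDerivAt.comp y
    hF').congr_fderiv ?_
  ext1 w
  refine ext_inner_right ℝ fun v => ?_
  -- Symmetry of `D²F y` is what makes the derivative `A` rather than `Aᵀ`.
  have hsymm := (hF.contDiffAt (x := y)).isSymmSndFDerivAt (by simp) w v
  simp only [ContinuousLinearMap.comp_apply, ContinuousLinearEquiv.coe_coe,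
    LinearIsometryEquiv.coe_toContinuousLinearEquiv, InnerProductSpace.toDual_symm_apply, hsymm]
  rw [real_inner_comm, Matrix.inner_toEuclideanCLM_eq_sum, ← hA, iteratedFDeriv_two_apply]
  rfl

end Euclidean

/-- Let `F : ℝⁿ → ℝ` be twice continuously differentiable with `L₂`-Lipschitz
Hessian (where `HF y` is the Hessian matrix of `F` at `y`), and let `α > 0`.  Fix `x`, `g` and a
symmetric matrix `Ĥ`, and let `x⁺` be a global minimizer over `ℝⁿ` of the model
`f̂(y) = ⟨g, y−x⟩ + (1/2)⟨y−x, Ĥ(y−x)⟩ + (α/6)‖y−x‖³`.  Then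
`‖∇F(x⁺)‖ ≤ (L₂+α)‖x⁺−x‖² + ‖∇F(x) − g‖ + (1/(2(L₂+α)))‖∇²F(x) − Ĥ‖²`. -/
theorem statement15 {n : ℕ} (F : EuclideanSpace ℝ (Fin n) → ℝ) (hF : ContDiff ℝ 2 F)
    (HF : EuclideanSpace ℝ (Fin n) → Matrix (Fin n) (Fin n) ℝ)
    (hHF : ∀ (y : EuclideanSpace ℝ (Fin n)) (w₁ w₂ : EuclideanSpace ℝ (Fin n)),
      iteratedFDeriv ℝ 2 F y ![w₁, w₂] = ∑ i, ∑ j, w₁ i * HF y i j * w₂ j)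
    (L₂ : ℝ) (hL₂ : 0 ≤ L₂)
    (hLip : ∀ x y : EuclideanSpace ℝ (Fin n), specNorm (HF x - HF y) ≤ L₂ * ‖x - y‖)
    (α : ℝ) (hα : 0 < α)
    (x g : EuclideanSpace ℝ (Fin n)) (Hhat : Matrix (Fin n) (Fin n) ℝ) (hHhat : Hhat.IsSymm)
    (xplus : EuclideanSpace ℝ (Fin n))
    (hmin : ∀ y : EuclideanSpace ℝ (Fin n),
      (∑ i, g i * (xplus - x) i) +
          (1 / 2) * (∑ i, ∑ j, (xplus - x) i * Hhat i j * (xplus - x) j) +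
          (α / 6) * ‖xplus - x‖ ^ 3 ≤
        (∑ i, g i * (y - x) i) + (1 / 2) * (∑ i, ∑ j, (y - x) i * Hhat i j * (y - x) j) +
          (α / 6) * ‖y - x‖ ^ 3) :
    ‖gradient F xplus‖ ≤
      (L₂ + α) * ‖xplus - x‖ ^ 2 + ‖gradient F x - g‖ +
        (1 / (2 * (L₂ + α))) * specNorm (HF x - Hhat) ^ 2 := by
  have hHess : ∀ y, HasFDerivAt (gradient F) (Matrix.toEuclideanCLM (𝕜 := ℝ) (HF y)) y :=
    fun y => hasFDerivAt_gradient_of_iteratedFDeriv hF (hHF y)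
  have hHessLip : ∀ y, ‖Matrix.toEuclideanCLM (𝕜 := ℝ) (HF y) - Matrix.toEuclideanCLM (𝕜 := ℝ) (HF x)‖
      ≤ L₂ * ‖y - x‖ := fun y => by
    rw [← map_sub]
    exact hLip y x
  have hstep : IsMinOn (cubicModel g (Matrix.toEuclideanCLM (𝕜 := ℝ) Hhat) α) univ (xplus - x) :=
    fun y _ => by simpa [cubicModel_toEuclideanCLM] using hmin (x + y)
  have h := norm_add_le_of_isMinOn_cubicModel hHess hL₂ hHessLip hα
    hHhat.isSymmetric_toEuclideanCLM hstep
  rwa [add_sub_cancel, ← map_sub] at h
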